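/- Gumbel-top-k trick: Let G_i ∼ Gumbel(log p_i) be independent for i = 1,…,n with p_i > 0, and let (σ(1),…,σ(n)) be the random permutation sorting the G_i in decreasing order. Then for any sequence of distinct indices i₁,…,i_k, P(σ(1) = i₁, …, σ(k) = i_k) = ∏_{j=1}^k p_{i_j} / (∑_{i} p_i − ∑_{l<j} p_{i_l}). That is, the top-k indices by Gumbel value are distributed as k samples drawn without replacement from the distribution proportional to p. -/

import Mathlib

open MeasureTheory ProbabilityTheory Set Filter Topology
open scoped ENNReal

/-- The CDF of the Gumbel distribution with location `μ`. -/
noncomputable def gumbelCDF (μ x : ℝ) : ℝ := Real.exp (-Real.exp (-(x - μ)))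

/-- `G` is distributed as `Gumbel(loc)` under `μ`. -/
def HasGumbelLaw {Ω : Type*} [MeasurableSpace Ω] (μ : Measure Ω) (G : Ω → ℝ) (loc : ℝ) :
    Prop :=
  ∀ x : ℝ, μ {ω | G ω ≤ x} = ENNReal.ofReal (gumbelCDF loc x)

noncomputable section GumbelAux

/-- density of `Gumbel(log p)`. -/
def gumbelPDF (p x : ℝ) : ℝ := p * Real.exp (-x) * Real.exp (-p * Real.exp (-x))

lemma continuous_gumbelPDF (p : ℝ) : Continuous (gumbelPDF p) := by
  unfold gumbelPDF; fun_prop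

lemma gumbelPDF_nonneg {p : ℝ} (hp : 0 ≤ p) (x : ℝ) : 0 ≤ gumbelPDF p x := by
  unfold gumbelPDF; positivity

lemma hasDerivAt_gumbelAnti (p x : ℝ) :
    HasDerivAt (fun y => Real.exp (-p * Real.exp (-y))) (gumbelPDF p x) x := by
  have h1 : HasDerivAt (fun y : ℝ => -y) (-1) x := (hasDerivAt_id x).neg
  have h2 : HasDerivAt (fun y : ℝ => Real.exp (-y)) (Real.exp (-x) * -1) x := h1.exp
  have h3 : HasDerivAt (fun y : ℝ => -p * Real.exp (-y)) (-p * (Real.exp (-x) * -1)) x :=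
    h2.const_mul _
  have h4 := h3.exp
  convert h4 using 1
  unfold gumbelPDF; ring

lemma gumbelPDF_mul_exp {p q : ℝ} (hpq : p + q ≠ 0) (x : ℝ) :
    gumbelPDF p x * Real.exp (-q * Real.exp (-x)) = p / (p + q) * gumbelPDF (p + q) x := by
  unfold gumbelPDF
  rw [mul_assoc (p * Real.exp (-x)), ← Real.exp_add]
  field_simp
  ring_nf

lemma intervalIntegral_gumbelPDF (p a b : ℝ) :
    ∫ x in a..b, gumbelPDF p x
      = Real.exp (-p * Real.exp (-b)) - Real.exp (-p * Real.exp (-a)) := by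
  refine intervalIntegral.integral_eq_sub_of_hasDerivAt (fun x _ => hasDerivAt_gumbelAnti p x) ?_
  exact (continuous_gumbelPDF p).intervalIntegrable a b

lemma integrableOn_gumbelPDF_Iic {p : ℝ} (hp : 0 ≤ p) (t : ℝ) :
    IntegrableOn (gumbelPDF p) (Iic t) := by
  refine integrableOn_Iic_of_intervalIntegral_norm_bounded (f := gumbelPDF p)
    (a := fun n : ℕ => -(n : ℝ)) (l := atTop) 1 t (fun n => ?_) ?_ ?_
  · exact ((continuous_gumbelPDF p).integrableOn_Ioc)
  · exact tendsto_neg_atBot_iff.mpr tendsto_natCast_atTop_atTop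
  · filter_upwards with n
    have h1 : ∫ x in (-(n:ℝ))..t, ‖gumbelPDF p x‖ = ∫ x in (-(n:ℝ))..t, gumbelPDF p x := by
      refine intervalIntegral.integral_congr fun x _ => ?_
      exact Real.norm_of_nonneg (gumbelPDF_nonneg hp x)
    rw [h1, intervalIntegral_gumbelPDF]
    have h2 : Real.exp (-p * Real.exp (-t)) ≤ 1 := by
      rw [Real.exp_le_one_iff]
      have : 0 ≤ p * Real.exp (-t) := by positivity
      simpa using this
    have h3 : 0 ≤ Real.exp (-p * Real.exp (-(-(n:ℝ)))) := (Real.exp_pos _).le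
    linarith

lemma tendsto_gumbelAnti_atBot {p : ℝ} (hp : 0 < p) :
    Tendsto (fun x => Real.exp (-p * Real.exp (-x))) atBot (𝓝 0) := by
  apply Real.tendsto_exp_atBot.comp
  have h1 : Tendsto (fun x : ℝ => Real.exp (-x)) atBot atTop :=
    Real.tendsto_exp_atTop.comp tendsto_neg_atBot_atTop
  exact h1.const_mul_atTop_of_neg (neg_lt_zero.mpr hp)

lemma integral_Iic_gumbelPDF {p : ℝ} (hp : 0 < p) (t : ℝ) :
    ∫ x in Iic t, gumbelPDF p x = Real.exp (-p * Real.exp (-t)) := by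
  have := integral_Iic_of_hasDerivAt_of_tendsto' (f := fun y => Real.exp (-p * Real.exp (-y)))
    (f' := gumbelPDF p) (a := t) (m := 0)
    (fun x _ => hasDerivAt_gumbelAnti p x) (integrableOn_gumbelPDF_Iic hp.le t)
    (tendsto_gumbelAnti_atBot hp)
  simpa using this


/-- The Gumbel law with weight `p` (location `log p`). -/
def gumbelLaw (p : ℝ) : Measure ℝ :=
  volume.withDensity fun x => ENNReal.ofReal (gumbelPDF p x)

lemma measurable_ofReal_gumbelPDF (p : ℝ) :
    Measurable fun x => ENNReal.ofReal (gumbelPDF p x) :=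
  ENNReal.measurable_ofReal.comp (continuous_gumbelPDF p).measurable

lemma gumbelLaw_Iic {p : ℝ} (hp : 0 < p) (t : ℝ) :
    gumbelLaw p (Iic t) = ENNReal.ofReal (Real.exp (-p * Real.exp (-t))) := by
  rw [gumbelLaw, withDensity_apply _ measurableSet_Iic,
    ← ofReal_integral_eq_lintegral_ofReal ((integrableOn_gumbelPDF_Iic hp.le t))
      (Eventually.of_forall fun x => gumbelPDF_nonneg hp.le x),
    integral_Iic_gumbelPDF hp]

lemma gumbelLaw_singleton (p t : ℝ) : gumbelLaw p {t} = 0 :=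
  (withDensity_absolutelyContinuous volume _) (measure_singleton t)

lemma gumbelLaw_Iio {p : ℝ} (hp : 0 < p) (t : ℝ) :
    gumbelLaw p (Iio t) = ENNReal.ofReal (Real.exp (-p * Real.exp (-t))) := by
  have h : Iic t = Iio t ∪ {t} := by
    ext x; simp [le_iff_lt_or_eq]
  rw [← gumbelLaw_Iic hp]
  refine le_antisymm (measure_mono Iio_subset_Iic_self) ?_
  calc gumbelLaw p (Iic t) ≤ gumbelLaw p (Iio t) + gumbelLaw p {t} := h ▸ measure_union_le _ _
    _ = gumbelLaw p (Iio t) := by rw [gumbelLaw_singleton, add_zero]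

lemma tendsto_exp_exp_atTop (p : ℝ) :
    Tendsto (fun n : ℕ => Real.exp (-p * Real.exp (-(n : ℝ)))) atTop (𝓝 1) := by
  have h0 : Tendsto (fun n : ℕ => -p * Real.exp (-(n : ℝ))) atTop (𝓝 0) := by
    have h1 : Tendsto (fun n : ℕ => Real.exp (-(n : ℝ))) atTop (𝓝 0) :=
      Real.tendsto_exp_atBot.comp (tendsto_neg_atBot_iff.mpr tendsto_natCast_atTop_atTop)
    simpa using h1.const_mul (-p)
  have := (Real.continuous_exp.tendsto 0).comp h0
  simpa [Function.comp_def] using this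

lemma isProbabilityMeasure_gumbelLaw {p : ℝ} (hp : 0 < p) :
    IsProbabilityMeasure (gumbelLaw p) := by
  constructor
  have hU : (univ : Set ℝ) = ⋃ n : ℕ, Iic (n : ℝ) := by
    ext x
    simp only [mem_univ, mem_iUnion, mem_Iic, true_iff]
    obtain ⟨n, hn⟩ := exists_nat_ge x
    exact ⟨n, hn⟩
  have hmono : Monotone fun n : ℕ => Iic (n : ℝ) := fun m n h => Iic_subset_Iic.2 (by exact_mod_cast h)
  have h1 := tendsto_measure_iUnion_atTop (μ := gumbelLaw p) hmono
  rw [← hU] at h1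
  have h2 : Tendsto (fun n : ℕ => gumbelLaw p (Iic (n : ℝ))) atTop (𝓝 1) := by
    simp only [gumbelLaw_Iic hp]
    rw [show (1 : ℝ≥0∞) = ENNReal.ofReal 1 by simp]
    exact (ENNReal.continuous_ofReal.tendsto 1).comp (tendsto_exp_exp_atTop p)
  exact tendsto_nhds_unique h1 h2

/-- The event that `idx` enumerates the top values of `x` in decreasing order. -/
def topEvent {ι : Type*} {k : ℕ} (idx : Fin k → ι) : Set (ι → ℝ) :=
  {x | ∀ j : Fin k, ∀ i : ι, (∀ j' : Fin k, j' ≤ j → idx j' ≠ i) → x i < x (idx j)}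

lemma measurableSet_topEvent {ι : Type*} [Countable ι] {k : ℕ} (idx : Fin k → ι) :
    MeasurableSet (topEvent idx) := by
  have h : topEvent idx = ⋂ j : Fin k, ⋂ i : ι,
      {x : ι → ℝ | (∀ j' : Fin k, j' ≤ j → idx j' ≠ i) → x i < x (idx j)} := by
    ext x; simp [topEvent]
  rw [h]
  refine MeasurableSet.iInter fun j => MeasurableSet.iInter fun i => ?_
  by_cases hc : ∀ j' : Fin k, j' ≤ j → idx j' ≠ i
  · have : {x : ι → ℝ | (∀ j' : Fin k, j' ≤ j → idx j' ≠ i) → x i < x (idx j)}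
        = {x | x i < x (idx j)} := by ext x; simp only [mem_setOf_eq]; tauto
    rw [this]
    exact measurableSet_lt (measurable_pi_apply i) (measurable_pi_apply _)
  · have : {x : ι → ℝ | (∀ j' : Fin k, j' ≤ j → idx j' ≠ i) → x i < x (idx j)} = univ := by
      ext x; simp [hc]
    rw [this]; exact MeasurableSet.univ

lemma measurableSet_boundEvent {ι : Type*} [Countable ι] (t : ℝ) :
    MeasurableSet {x : ι → ℝ | ∀ i, x i < t} := by
  have : {x : ι → ℝ | ∀ i, x i < t} = ⋂ i, (fun x : ι → ℝ => x i) ⁻¹' Iio t := by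
    ext x; simp
  rw [this]
  exact MeasurableSet.iInter fun i => (measurable_pi_apply i) measurableSet_Iio

lemma denom_pos {ι : Type*} [Fintype ι] {p : ι → ℝ} (hp : ∀ i, 0 < p i) {k : ℕ}
    {idx : Fin k → ι} (hinj : Function.Injective idx) (j : Fin k) :
    0 < (∑ i, p i) - ∑ j' ∈ Finset.univ.filter (· < j), p (idx j') := by
  classical
  have h1 : ∑ j' ∈ Finset.univ.filter (· < j), p (idx j')
      = ∑ i ∈ (Finset.univ.filter (· < j)).image idx, p i :=
    (Finset.sum_image fun a _ b _ h => hinj h).symm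
  rw [h1, sub_pos]
  refine Finset.sum_lt_sum_of_subset (Finset.subset_univ _) (Finset.mem_univ (idx j)) ?_
    (hp _) fun i _ _ => (hp i).le
  intro hmem
  obtain ⟨j', hj', hj'eq⟩ := Finset.mem_image.mp hmem
  have := hinj hj'eq
  simp only [Finset.mem_filter] at hj'
  exact absurd (this ▸ hj'.2) (lt_irrefl j)

lemma prodC_nonneg {ι : Type*} [Fintype ι] {p : ι → ℝ} (hp : ∀ i, 0 < p i) {k : ℕ}
    {idx : Fin k → ι} (hinj : Function.Injective idx) :
    0 ≤ ∏ j : Fin k, p (idx j) /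
      ((∑ i, p i) - ∑ j' ∈ Finset.univ.filter (· < j), p (idx j')) :=
  Finset.prod_nonneg fun j _ => div_nonneg (hp _).le (denom_pos hp hinj j).le

lemma filter_sum_succ {k : ℕ} (j : Fin k) (f : Fin (k + 1) → ℝ) :
    ∑ j' ∈ Finset.univ.filter (· < Fin.succ j), f j'
      = f 0 + ∑ l ∈ Finset.univ.filter (· < j), f (Fin.succ l) := by
  rw [Finset.sum_filter, Finset.sum_filter, Fin.sum_univ_succ]
  simp [Fin.succ_pos, Fin.succ_lt_succ_iff]
universe u

lemma lintegral_pi_unique {κ : Type u} [F : Fintype κ] [U : Unique κ] (m : Measure ℝ)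
    [IsProbabilityMeasure m] (h : ℝ → ℝ≥0∞) (hh : Measurable h) :
    ∫⁻ z : κ → ℝ, h (z default) ∂(Measure.pi fun _ : κ => m) = ∫⁻ a, h a ∂m := by
  rw [← lintegral_map hh (measurable_pi_apply default)]
  congr 1
  refine Measure.ext fun s hs => ?_
  rw [Measure.map_apply (measurable_pi_apply default) hs]
  have hpre : (fun z : κ → ℝ => z default) ⁻¹' s = Set.pi univ (fun _ => s) := by
    ext z
    simp only [mem_preimage, Set.mem_pi, mem_univ, forall_true_left]
    constructor
    · intro hz i
      rwa [Unique.eq_default i]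
    · intro hz
      exact hz default
  rw [hpre, Measure.pi_pi, Finset.prod_const]
  have hcard : (Finset.univ : Finset κ).card = 1 := by
    rw [Finset.card_eq_one]
    exact ⟨default, Finset.eq_singleton_iff_unique_mem.mpr
      ⟨Finset.mem_univ _, fun x _ => Unique.eq_default x⟩⟩
  rw [hcard, pow_one]

lemma gumbel_key (k : ℕ) : ∀ (ι : Type u) [Fintype ι], ∀ (p : ι → ℝ), (∀ i, 0 < p i) →
    ∀ (idx : Fin k → ι), Function.Injective idx → ∀ t : ℝ,
    Measure.pi (fun i => gumbelLaw (p i)) (topEvent idx ∩ {x | ∀ i, x i < t}) =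
      ENNReal.ofReal ((∏ j : Fin k, p (idx j) /
        ((∑ i, p i) - ∑ j' ∈ Finset.univ.filter (· < j), p (idx j'))) *
        Real.exp (-(∑ i, p i) * Real.exp (-t))) := by
  induction k with
  | zero =>
    intro ι _ p hp idx hinj t
    haveI : ∀ i, IsProbabilityMeasure (gumbelLaw (p i)) :=
      fun i => isProbabilityMeasure_gumbelLaw (hp i)
    have h1 : topEvent idx ∩ {x : ι → ℝ | ∀ i, x i < t} = Set.pi univ fun _ : ι => Iio t := by
      ext x
      simp [topEvent, Set.mem_pi]
    rw [h1, Measure.pi_pi]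
    simp only [gumbelLaw_Iio (hp _)]
    rw [← ENNReal.ofReal_prod_of_nonneg fun i _ => (Real.exp_pos _).le]
    congr 1
    rw [← Real.exp_sum]
    simp only [Finset.univ_eq_empty, Finset.prod_empty, one_mul]
    congr 1
    rw [← Finset.sum_mul, Finset.sum_neg_distrib]
  | succ k ih =>
    intro ι _ p hp idx hinj t
    classical
    haveI hprob : ∀ i, IsProbabilityMeasure (gumbelLaw (p i)) :=
      fun i => isProbabilityMeasure_gumbelLaw (hp i)
    haveI : Nonempty ι := ⟨idx 0⟩
    set S : ℝ := ∑ i, p i with hSdef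
    have hSpos : 0 < S := Finset.sum_pos (fun i _ => hp i) Finset.univ_nonempty
    have hne : ∀ j : Fin k, ¬ idx (Fin.succ j) = idx 0 := fun j h => Fin.succ_ne_zero j (hinj h)
    set idx' : Fin k → {i : ι // ¬ i = idx 0} := fun j => ⟨idx (Fin.succ j), hne j⟩ with hidx'
    have hinj' : Function.Injective idx' := by
      intro a b h
      exact Fin.succ_injective _ (hinj (congrArg Subtype.val h))
    have hS' : (∑ i : {i : ι // ¬ i = idx 0}, p i.1) = S - p (idx 0) := by
      have h1 : ∑ i ∈ Finset.univ.erase (idx 0), p i = ∑ i : {i : ι // ¬ i = idx 0}, p i.1 := by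
        refine Finset.sum_subtype _ (fun x => ?_) p
        simp [Finset.mem_erase, ne_eq]
      rw [← h1, eq_sub_iff_add_eq, Finset.sum_erase_add _ _ (Finset.mem_univ _)]
    haveI : ∀ i : {i : ι // ¬ i = idx 0}, IsProbabilityMeasure (gumbelLaw (p i.1)) :=
      fun i => isProbabilityMeasure_gumbelLaw (hp i.1)
    haveI : IsProbabilityMeasure (Measure.pi fun i : {i : ι // ¬ i = idx 0} => gumbelLaw (p i.1)) :=
      ⟨by rw [Measure.pi_univ]; simp [measure_univ]⟩
    haveI : IsProbabilityMeasure (Measure.pi fun i : {i : ι // i = idx 0} => gumbelLaw (p i.1)) :=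
      ⟨by rw [Measure.pi_univ]; simp [measure_univ]⟩
    set C' : ℝ := ∏ j : Fin k, p (idx' j).1 /
      ((S - p (idx 0)) - ∑ l ∈ Finset.univ.filter (· < j), p (idx' l).1) with hC'
    have hC'nonneg : 0 ≤ C' := by
      have h := prodC_nonneg (p := fun i : {i : ι // ¬ i = idx 0} => p i.1)
        (fun i => hp i.1) hinj'
      rw [hS'] at h
      exact h
    set e := MeasurableEquiv.piEquivPiSubtypeProd (fun _ : ι => ℝ) (fun i => i = idx 0) with he
    have mp := measurePreserving_piEquivPiSubtypeProd
      (fun i : ι => gumbelLaw (p i)) (fun i => i = idx 0)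
    set sTarget : Set (({i : ι // i = idx 0} → ℝ) × ({i : ι // ¬ i = idx 0} → ℝ)) :=
      {q | q.1 ⟨idx 0, rfl⟩ < t ∧ (topEvent idx' q.2 ∧ ∀ i, q.2 i < q.1 ⟨idx 0, rfl⟩)}
      with hsT
    have hm1 : Measurable fun q : (({i : ι // i = idx 0} → ℝ) × ({i : ι // ¬ i = idx 0} → ℝ)) =>
        q.1 ⟨idx 0, rfl⟩ := (measurable_pi_apply _).comp measurable_fst
    have hsTarget : MeasurableSet sTarget := by
      have h2 : sTarget = ((fun q : (({i : ι // i = idx 0} → ℝ) × ({i : ι // ¬ i = idx 0} → ℝ)) =>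
          q.1 ⟨idx 0, rfl⟩) ⁻¹' Iio t) ∩ ((Prod.snd ⁻¹' topEvent idx') ∩
          ⋂ i : {i : ι // ¬ i = idx 0}, {q : (({i : ι // i = idx 0} → ℝ) ×
            ({i : ι // ¬ i = idx 0} → ℝ)) | q.2 i < q.1 ⟨idx 0, rfl⟩}) := by
        ext q
        simp only [hsT, mem_setOf_eq, mem_inter_iff, mem_preimage, mem_Iio, mem_iInter]
        tauto
      rw [h2]
      exact (hm1 measurableSet_Iio).inter
        (((measurableSet_topEvent idx').preimage measurable_snd).inter
          (MeasurableSet.iInter fun i => by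
            have hm2 : Measurable fun q : (({i : ι // i = idx 0} → ℝ) ×
                ({i : ι // ¬ i = idx 0} → ℝ)) => q.2 i :=
              (measurable_pi_apply i).comp measurable_snd
            exact measurableSet_lt hm2 hm1))
    have hsplit : topEvent idx ∩ {x : ι → ℝ | ∀ i, x i < t} = e ⁻¹' sTarget := by
      ext x
      simp only [mem_inter_iff, mem_preimage, hsT, mem_setOf_eq]
      constructor
      · rintro ⟨hord, hbd⟩
        refine ⟨hbd (idx 0), ?_, ?_⟩
        · intro j i hcond
          refine hord (Fin.succ j) i.1 ?_
          intro j' hj'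
          induction j' using Fin.cases with
          | zero => exact fun h => i.2 h.symm
          | succ l =>
            have hl : l ≤ j := by
              rwa [Fin.succ_le_succ_iff] at hj'
            exact fun h => hcond l hl (Subtype.ext h)
        · intro i
          refine hord 0 i.1 ?_
          intro j' hj'
          have : j' = 0 := le_antisymm hj' (Fin.zero_le j')
          subst this
          exact fun h => i.2 h.symm
      · rintro ⟨h1, h2, h3⟩
        constructor
        · intro j i hcond
          induction j using Fin.cases with
          | zero => exact h3 ⟨i, fun h => hcond 0 le_rfl h.symm⟩
          | succ j₀ =>
            have hi : ¬ i = idx 0 := fun h => hcond 0 (Fin.zero_le _) h.symm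
            refine h2 j₀ ⟨i, hi⟩ ?_
            intro l hl
            exact fun h => hcond (Fin.succ l) (Fin.succ_le_succ_iff.mpr hl)
              (congrArg Subtype.val h)
        · intro i
          by_cases hi : i = idx 0
          · rw [hi]; exact h1
          · exact lt_trans (h3 ⟨i, hi⟩) h1
    rw [hsplit, mp.measure_preimage hsTarget.nullMeasurableSet,
      Measure.prod_apply hsTarget]
    set g : ℝ → ℝ≥0∞ :=
      fun a => ENNReal.ofReal (C' * Real.exp (-(S - p (idx 0)) * Real.exp (-a))) with hg
    have hgmeas : Measurable g := by
      apply ENNReal.measurable_ofReal.comp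
      fun_prop
    have hslice : ∀ z : {i : ι // i = idx 0} → ℝ,
        (Measure.pi fun i : {i : ι // ¬ i = idx 0} => gumbelLaw (p i.1))
            (Prod.mk z ⁻¹' sTarget)
          = (Iio t).indicator g (z default) := by
      intro z
      by_cases hz : z ⟨idx 0, rfl⟩ < t
      · have hset : Prod.mk z ⁻¹' sTarget
            = topEvent idx' ∩ {y | ∀ i, y i < z ⟨idx 0, rfl⟩} := by
          ext y
          simp only [hsT, mem_preimage, mem_setOf_eq, mem_inter_iff]
          tauto
        rw [hset, ih _ (fun i => p i.1) (fun i => hp i.1) idx' hinj' _, hS',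
          Set.indicator_of_mem (show z default ∈ Iio t from hz) g]
        rfl
      · have hset : Prod.mk z ⁻¹' sTarget = ∅ := by
          ext y
          simp only [hsT, mem_preimage, mem_setOf_eq, mem_empty_iff_false, iff_false]
          tauto
        rw [hset, measure_empty,
          Set.indicator_of_notMem (show z default ∉ Iio t from hz) g]
    simp only [hslice]
    have hconst : (fun i : {i : ι // i = idx 0} => gumbelLaw (p i.1))
        = fun _ => gumbelLaw (p (idx 0)) := funext fun i => by rw [i.2]
    rw [hconst]
    have hFeq : (Subtype.fintype fun i : ι => i = idx 0) = Fintype.subtypeEq (idx 0) :=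
      Subsingleton.elim _ _
    rw [hFeq]
    rw [lintegral_pi_unique (gumbelLaw (p (idx 0))) ((Iio t).indicator g)
      (hgmeas.indicator measurableSet_Iio)]
    rw [lintegral_indicator measurableSet_Iio, gumbelLaw,
      setLIntegral_withDensity_eq_setLIntegral_mul volume
        (measurable_ofReal_gumbelPDF _) hgmeas measurableSet_Iio]
    have hps : p (idx 0) + (S - p (idx 0)) = S := by ring
    have hptwise : ∀ a : ℝ,
        gumbelPDF (p (idx 0)) a * (C' * Real.exp (-(S - p (idx 0)) * Real.exp (-a)))
          = C' * (p (idx 0) / S) * gumbelPDF S a := by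
      intro a
      have h := gumbelPDF_mul_exp (p := p (idx 0)) (q := S - p (idx 0))
        (by rw [hps]; exact hSpos.ne') a
      rw [hps] at h
      calc gumbelPDF (p (idx 0)) a * (C' * Real.exp (-(S - p (idx 0)) * Real.exp (-a)))
          = C' * (gumbelPDF (p (idx 0)) a * Real.exp (-(S - p (idx 0)) * Real.exp (-a))) := by
            ring
        _ = C' * (p (idx 0) / S * gumbelPDF S a) := by rw [h]
        _ = C' * (p (idx 0) / S) * gumbelPDF S a := by ring
    have hstep : ∫⁻ a in Iio t,
        ((fun a => ENNReal.ofReal (gumbelPDF (p (idx 0)) a)) * g) a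
        = ENNReal.ofReal (C' * (p (idx 0) / S) * Real.exp (-S * Real.exp (-t))) := by
      have hcongr : ∀ a : ℝ, ((fun a => ENNReal.ofReal (gumbelPDF (p (idx 0)) a)) * g) a
          = ENNReal.ofReal (C' * (p (idx 0) / S) * gumbelPDF S a) := by
        intro a
        simp only [Pi.mul_apply, hg]
        rw [← ENNReal.ofReal_mul (gumbelPDF_nonneg (hp _).le a), hptwise a]
      simp only [hcongr]
      have hint : IntegrableOn (fun a => C' * (p (idx 0) / S) * gumbelPDF S a) (Iio t) := by
        have h1 : IntegrableOn (fun a => C' * (p (idx 0) / S) * gumbelPDF S a) (Iic t) :=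
          (integrableOn_gumbelPDF_Iic hSpos.le t).const_mul _
        exact h1.mono_set Iio_subset_Iic_self
      rw [← ofReal_integral_eq_lintegral_ofReal hint
        (Eventually.of_forall fun a =>
          mul_nonneg (mul_nonneg hC'nonneg (div_nonneg (hp _).le hSpos.le))
            (gumbelPDF_nonneg hSpos.le a))]
      congr 1
      rw [MeasureTheory.setIntegral_congr_set Iio_ae_eq_Iic,
        MeasureTheory.integral_const_mul, integral_Iic_gumbelPDF hSpos]
    rw [hstep]
    congr 1
    have h0 : Finset.univ.filter (· < (0 : Fin (k + 1))) = ∅ := by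
      refine Finset.filter_eq_empty_iff.mpr fun j _ => ?_
      exact Fin.not_lt_zero j
    rw [Fin.prod_univ_succ, h0, Finset.sum_empty, sub_zero]
    have hprod : (∏ j : Fin k, p (idx (Fin.succ j)) /
        (S - ∑ j' ∈ Finset.univ.filter (· < Fin.succ j), p (idx j'))) = C' := by
      refine Finset.prod_congr rfl fun j _ => ?_
      rw [filter_sum_succ j (fun l => p (idx l))]
      have hsub : S - (p (idx 0) + ∑ l ∈ Finset.univ.filter (· < j), p (idx (Fin.succ l)))
          = (S - p (idx 0)) - ∑ l ∈ Finset.univ.filter (· < j), p (idx (Fin.succ l)) := by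
        ring
      rw [hsub]
    rw [hprod]
    ring


end GumbelAux

/-- Gumbel-top-k trick: if `G i ∼ Gumbel(log pᵢ)` are independent with `pᵢ > 0`,
then for distinct indices `i₁, …, i_k` (given by an injective `idx : Fin k → ι`), the
probability that `i₁, …, i_k` are exactly the indices of the `k` largest Gumbel values in
decreasing order equals `∏_{j} p_{i_j} / (∑ᵢ pᵢ − ∑_{l<j} p_{i_l})`, i.e. the top-`k` indices
are distributed as `k` samples drawn without replacement from the distribution ∝ `p`. -/
theorem gumbel_top_k {Ω ι : Type*} [MeasurableSpace Ω] [Fintype ι] [Nonempty ι]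
    (μ : Measure Ω) [IsProbabilityMeasure μ] (p : ι → ℝ) (hp : ∀ i, 0 < p i)
    (G : ι → Ω → ℝ) (hmeas : ∀ i, Measurable (G i))
    (hindep : iIndepFun G μ)
    (hlaw : ∀ i, HasGumbelLaw μ (G i) (Real.log (p i)))
    (k : ℕ) (hk : k ≤ Fintype.card ι) (idx : Fin k → ι) (hidx : Function.Injective idx) :
    μ {ω | ∀ j : Fin k, ∀ i : ι,
          (∀ j' : Fin k, j' ≤ j → idx j' ≠ i) → G i ω < G (idx j) ω} =
      ENNReal.ofReal (∏ j : Fin k,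
        p (idx j) / ((∑ i, p i) - ∑ j' ∈ Finset.univ.filter (· < j), p (idx j'))) := by
  classical
  haveI hprob : ∀ i, IsProbabilityMeasure (gumbelLaw (p i)) :=
    fun i => isProbabilityMeasure_gumbelLaw (hp i)
  have hjoint : Measurable fun ω i => G i ω := measurable_pi_lambda _ hmeas
  have hlawmap : ∀ i, μ.map (G i) = gumbelLaw (p i) := by
    intro i
    haveI : IsProbabilityMeasure (μ.map (G i)) :=
      Measure.isProbabilityMeasure_map (hmeas i).aemeasurable
    refine Measure.ext_of_Iic _ _ fun x => ?_
    rw [Measure.map_apply (hmeas i) measurableSet_Iic,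
      show G i ⁻¹' Iic x = {ω | G i ω ≤ x} from rfl, hlaw i x, gumbelLaw_Iic (hp i)]
    congr 1
    unfold gumbelCDF
    have hxp : Real.exp (-(x - Real.log (p i))) = p i * Real.exp (-x) := by
      rw [neg_sub, Real.exp_sub, Real.exp_log (hp i), div_eq_mul_inv, Real.exp_neg]
    rw [hxp, neg_mul]
  have hmap : μ.map (fun ω i => G i ω) = Measure.pi fun i => gumbelLaw (p i) := by
    refine (Measure.pi_eq fun s hs => ?_).symm
    rw [Measure.map_apply hjoint (MeasurableSet.univ_pi hs)]
    have hpre : (fun ω i => G i ω) ⁻¹' Set.pi univ s = ⋂ i ∈ Finset.univ, G i ⁻¹' s i := by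
      ext ω
      simp [Set.mem_pi]
    rw [hpre, hindep.measure_inter_preimage_eq_mul Finset.univ (fun i _ => hs i)]
    refine Finset.prod_congr rfl fun i _ => ?_
    rw [← hlawmap i, Measure.map_apply (hmeas i) (hs i)]
  have hev : {ω | ∀ j : Fin k, ∀ i : ι,
        (∀ j' : Fin k, j' ≤ j → idx j' ≠ i) → G i ω < G (idx j) ω}
      = (fun ω i => G i ω) ⁻¹' topEvent idx := rfl
  rw [hev, ← Measure.map_apply hjoint (measurableSet_topEvent idx), hmap]
  set C : ℝ := ∏ j : Fin k,
    p (idx j) / ((∑ i, p i) - ∑ j' ∈ Finset.univ.filter (· < j), p (idx j')) with hC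
  have hU : topEvent idx = ⋃ n : ℕ, (topEvent idx ∩ {x : ι → ℝ | ∀ i, x i < (n : ℝ)}) := by
    ext x
    simp only [mem_iUnion, mem_inter_iff]
    constructor
    · intro hx
      obtain ⟨n, hn⟩ := exists_nat_gt (Finset.univ.sup' Finset.univ_nonempty x)
      exact ⟨n, hx, fun i => lt_of_le_of_lt (Finset.le_sup' x (Finset.mem_univ i)) hn⟩
    · rintro ⟨n, h, -⟩
      exact h
  have hmono : Monotone fun n : ℕ => topEvent idx ∩ {x : ι → ℝ | ∀ i, x i < (n : ℝ)} := by
    intro m n hmn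
    refine inter_subset_inter_right _ fun x hx i => lt_of_lt_of_le (hx i) ?_
    exact_mod_cast hmn
  have h1 := tendsto_measure_iUnion_atTop
    (μ := Measure.pi fun i => gumbelLaw (p i)) hmono
  rw [← hU] at h1
  have h2 : Tendsto (fun n : ℕ => (Measure.pi fun i => gumbelLaw (p i))
      (topEvent idx ∩ {x : ι → ℝ | ∀ i, x i < (n : ℝ)})) atTop (𝓝 (ENNReal.ofReal C)) := by
    have hkey : ∀ n : ℕ, (Measure.pi fun i => gumbelLaw (p i))
        (topEvent idx ∩ {x : ι → ℝ | ∀ i, x i < (n : ℝ)})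
        = ENNReal.ofReal (C * Real.exp (-(∑ i, p i) * Real.exp (-(n : ℝ)))) :=
      fun n => gumbel_key k ι p hp idx hidx n
    simp only [hkey]
    have hr : Tendsto (fun n : ℕ => C * Real.exp (-(∑ i, p i) * Real.exp (-(n : ℝ))))
        atTop (𝓝 C) := by
      have := (tendsto_exp_exp_atTop (∑ i, p i)).const_mul C
      simpa using this
    exact (ENNReal.continuous_ofReal.tendsto C).comp hr
  exact tendsto_nhds_unique h1 h2
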